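/- Suppose real-valued functions λ₁₂, λ₁₃, λ₂₃, λ̃, λ₃ of t ≥ t₀ satisfy λ₂₃(t), λ₃(t) ≥ c₁/t², λ₁₃(t) ≥ c₃ ln(t₀)/(t² ln(t)²), |λ₁₂(t)|, |λ̃(t)| ≤ c₂ ln(t₀)/(t² ln(t)²), and λ₁₂(t) + λ₁₃(t) ≥ c₄ ln(t₀)/(t² ln(t)²) for positive constants c₁, c₂, c₃, c₄. Then for t₀ sufficiently large (depending only on the cᵢ), for all t ≥ max(t₀, e): (a) λ₁₂ + (λ₁₃+λ₂₃)/2 > 0; (b) (λ₁₂+λ₁₃)(λ₁₂+λ₂₃) > λ̃²; (c) λ₁₃λ₂₃ > λ̃²; (d) λ₁₃, λ₂₃, λ₃ > 0. -/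

import Mathlib

/-!
Write `A = log t₀ / (t² log² t)` and `B = c₁ / t²`. Since `log t ≥ log t₀`, one has
`log t₀ · A ≤ 1 / t²`, so `K · A < B` as soon as `c₁ log t₀ > K`. With
`K = c₂ + c₂²/c₄ + c₂²/c₃` this single smallness condition makes the `O(A)` terms negligible
against `B` in each of the four inequalities.
-/

open Real

theorem log_mul_log_div_sq_le {t₀ t : ℝ} (ht₀ : 1 < t₀) (ht : t₀ ≤ t) :
    log t₀ * (log t₀ / (t ^ 2 * log t ^ 2)) ≤ 1 / t ^ 2 := by
  have hL₀ : 0 < log t₀ := log_pos ht₀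
  have hL : log t₀ ≤ log t := log_le_log (by linarith) ht
  have : 0 < log t := hL₀.trans_le hL
  have : 0 < t := by linarith
  have ht2 : 0 < t ^ 2 := by positivity
  rw [← mul_div_assoc, div_le_div_iff₀ (by positivity) ht2]
  have : log t₀ * log t₀ ≤ log t ^ 2 := by nlinarith
  nlinarith

theorem log_div_mul_log_sq_pos {t₀ t : ℝ} (ht₀ : 1 < t₀) (ht : t₀ ≤ t) :
    0 < log t₀ / (t ^ 2 * log t ^ 2) := by
  have hL₀ : 0 < log t₀ := log_pos ht₀
  have : 0 < log t := hL₀.trans_le (log_le_log (by linarith) ht)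
  have : 0 < t := by linarith
  positivity

theorem mul_log_div_sq_lt {c₁ K t₀ t : ℝ} (hc₁ : 0 < c₁) (ht₀ : 1 < t₀) (ht : t₀ ≤ t)
    (hK : K < c₁ * log t₀) :
    K * (log t₀ / (t ^ 2 * log t ^ 2)) < c₁ / t ^ 2 := by
  have hA := log_div_mul_log_sq_pos ht₀ ht
  calc K * (log t₀ / (t ^ 2 * log t ^ 2))
      < c₁ * log t₀ * (log t₀ / (t ^ 2 * log t ^ 2)) := mul_lt_mul_of_pos_right hK hA
    _ = c₁ * (log t₀ * (log t₀ / (t ^ 2 * log t ^ 2))) := mul_assoc _ _ _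
    _ ≤ c₁ * (1 / t ^ 2) := mul_le_mul_of_nonneg_left (log_mul_log_div_sq_le ht₀ ht) hc₁.le
    _ = c₁ / t ^ 2 := mul_one_div _ _

theorem ric2_criterion_of_bounds {c₂ c₃ c₄ A B x12 x13 x23 xt x3 : ℝ}
    (hc₃ : 0 < c₃) (hc₄ : 0 < c₄) (hA : 0 < A)
    (hAB : (c₂ + c₂ ^ 2 / c₄ + c₂ ^ 2 / c₃) * A < B)
    (h23 : B ≤ x23) (h3 : B ≤ x3) (h13 : c₃ * A ≤ x13) (h12 : |x12| ≤ c₂ * A)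
    (hxt : |xt| ≤ c₂ * A) (h1213 : c₄ * A ≤ x12 + x13) :
    (x12 + (x13 + x23) / 2 > 0) ∧ ((x12 + x13) * (x12 + x23) > xt ^ 2) ∧
      (x13 * x23 > xt ^ 2) ∧ (x13 > 0 ∧ x23 > 0 ∧ x3 > 0) := by
  have hc₂A : 0 ≤ c₂ * A := (abs_nonneg _).trans h12
  have hq₄ : 0 ≤ c₂ ^ 2 / c₄ * A := by positivity
  have hq₃ : 0 ≤ c₂ ^ 2 / c₃ * A := by positivity
  have hc₄q : c₄ * (c₂ ^ 2 / c₄ * A) = c₂ ^ 2 * A := by field_simp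
  have hc₃q : c₃ * (c₂ ^ 2 / c₃ * A) = c₂ ^ 2 * A := by field_simp
  have hB₁ : c₂ * A < B := by nlinarith
  have hB₂ : c₂ ^ 2 * A < c₄ * (B - c₂ * A) := by nlinarith
  have hB₃ : c₂ ^ 2 * A < c₃ * B := by nlinarith
  have hxt2 : xt ^ 2 ≤ (c₂ * A) ^ 2 := sq_le_sq' (abs_le.mp hxt).1 (abs_le.mp hxt).2
  have h1223 : B - c₂ * A ≤ x12 + x23 := by linarith [(abs_le.mp h12).1]
  have hc₄A : 0 < c₄ * A := mul_pos hc₄ hA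
  have hx13 : 0 < x13 := (mul_pos hc₃ hA).trans_le h13
  refine ⟨by linarith, ?_, ?_, hx13, by linarith, by linarith⟩
  · have : c₄ * A * (B - c₂ * A) ≤ (x12 + x13) * (x12 + x23) :=
      mul_le_mul h1213 h1223 (by linarith) (by linarith)
    nlinarith [mul_lt_mul_of_pos_right hB₂ hA]
  · have : c₃ * A * B ≤ x13 * x23 := mul_le_mul h13 h23 (by linarith) hx13.le
    nlinarith [mul_lt_mul_of_pos_right hB₃ hA]

/-- the decay estimates imply the Ric₂ > 0 criterion (Proposition 2.2
with k = 2) for t₀ sufficiently large, depending only on the constants c₁, c₂, c₃, c₄. -/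
theorem stmt11 (c₁ c₂ c₃ c₄ : ℝ) (hc₁ : 0 < c₁) (hc₂ : 0 < c₂) (hc₃ : 0 < c₃)
    (hc₄ : 0 < c₄) :
    ∃ T : ℝ, ∀ t₀ : ℝ, T ≤ t₀ →
      ∀ l12 l13 l23 lt l3 : ℝ → ℝ,
        (∀ t, t₀ ≤ t → c₁ / t ^ 2 ≤ l23 t) →
        (∀ t, t₀ ≤ t → c₁ / t ^ 2 ≤ l3 t) →
        (∀ t, t₀ ≤ t → c₃ * Real.log t₀ / (t ^ 2 * Real.log t ^ 2) ≤ l13 t) →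
        (∀ t, t₀ ≤ t → |l12 t| ≤ c₂ * Real.log t₀ / (t ^ 2 * Real.log t ^ 2)) →
        (∀ t, t₀ ≤ t → |lt t| ≤ c₂ * Real.log t₀ / (t ^ 2 * Real.log t ^ 2)) →
        (∀ t, t₀ ≤ t → c₄ * Real.log t₀ / (t ^ 2 * Real.log t ^ 2) ≤ l12 t + l13 t) →
        ∀ t, max t₀ (Real.exp 1) ≤ t →
          (l12 t + (l13 t + l23 t) / 2 > 0) ∧
          ((l12 t + l13 t) * (l12 t + l23 t) > lt t ^ 2) ∧
          (l13 t * l23 t > lt t ^ 2) ∧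
          (l13 t > 0 ∧ l23 t > 0 ∧ l3 t > 0) := by
  set K := c₂ + c₂ ^ 2 / c₄ + c₂ ^ 2 / c₃
  refine ⟨exp (K / c₁ + 1), fun t₀ hT l12 l13 l23 lt l3 h23 h3 h13 h12 hlt h1213 t ht => ?_⟩
  have htt₀ : t₀ ≤ t := le_of_max_le_left ht
  have ht₀ : 1 < t₀ := (one_lt_exp_iff.mpr (by positivity)).trans_le hT
  have hKlog : K < c₁ * log t₀ := by
    have : K / c₁ + 1 ≤ log t₀ := by rwa [← exp_le_exp, exp_log (by linarith)]
    exact (div_lt_iff₀' hc₁).mp (by linarith)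
  simp only [mul_div_assoc] at h13 h12 hlt h1213
  exact ric2_criterion_of_bounds hc₃ hc₄ (log_div_mul_log_sq_pos ht₀ htt₀)
    (mul_log_div_sq_lt hc₁ ht₀ htt₀ hKlog)
    (h23 t htt₀) (h3 t htt₀) (h13 t htt₀) (h12 t htt₀) (hlt t htt₀) (h1213 t htt₀)
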